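/- arXiv:2605.04614 — 3 statements merged into one kernel-verified Lean document; each statement's English description precedes it below -/
import Mathlib

section
/- The number of subgroups of index d in the group ℤ × ℤ is equal to the sum of divisors of d, and in particular is at most d². -/
/-!
A subgroup of finite index of `ℤ × ℤ` has a unique basis `(a, 0), (t, b)` in Hermite normal
form, `a, b > 0` and `0 ≤ t < a`: `a` generates its intersection with `ℤ × 0`, `b` generates its
projection to the second factor, and `t` is then determined modulo `a`. The index is the
determinant `a * b`, so the subgroups of index `d` correspond to the pairs of a divisor `a ∣ d`
and a residue `t` modulo `a`, and there are `∑_{a ∣ d} a` of them. Each of the at most `d`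
divisors is at most `d`, whence the bound `d²`.
-/

theorem AddMonoidHom.index_range_eq_natAbs_det {M : Type*} [AddCommGroup M] [Module.Free ℤ M]
    [Module.Finite ℤ M] (f : M →+ M) (hf : Function.Injective f) :
    f.range.index = (LinearMap.det f.toIntLinearMap).natAbs :=
  (Submodule.natAbs_det_equiv _ (LinearEquiv.ofInjective f.toIntLinearMap hf)).symm

theorem Int.exists_natCast_forall_mem_iff_dvd (K : AddSubgroup ℤ) :
    ∃ a : ℕ, ∀ x, x ∈ K ↔ (a : ℤ) ∣ x := by
  obtain ⟨g, rfl⟩ := Int.subgroup_cyclic K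
  refine ⟨g.natAbs, fun x => ?_⟩
  rw [← AddSubgroup.zmultiples_eq_closure, ← Int.zmultiples_natAbs, Int.mem_zmultiples_iff]

theorem Nat.sum_divisors_le_sq (n : ℕ) : ∑ k ∈ n.divisors, k ≤ n ^ 2 :=
  calc ∑ k ∈ n.divisors, k ≤ n.divisors.card • n :=
        Finset.sum_le_card_nsmul _ _ _ fun _ hk => Nat.divisor_le hk
    _ ≤ n • n := Nat.mul_le_mul_right n (Nat.card_divisors_le_self n)
    _ = n ^ 2 := by rw [smul_eq_mul, sq]

def hermiteMap (a b t : ℤ) : ℤ × ℤ →+ ℤ × ℤ where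
  toFun p := (p.1 * a + p.2 * t, p.2 * b)
  map_zero' := by simp
  map_add' p q := by ext <;> simp <;> ring

theorem hermiteMap_apply (a b t : ℤ) (p : ℤ × ℤ) :
    hermiteMap a b t p = p.1 • (a, 0) + p.2 • (t, b) := by
  ext <;> simp [hermiteMap]

theorem hermiteMap_injective {a b : ℤ} (ha : a ≠ 0) (hb : b ≠ 0) (t : ℤ) :
    Function.Injective (hermiteMap a b t) := by
  rintro ⟨m, n⟩ ⟨m', n'⟩ h
  simp only [hermiteMap, AddMonoidHom.coe_mk, ZeroHom.coe_mk, Prod.mk.injEq] at h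
  obtain rfl : n = n' := mul_right_cancel₀ hb h.2
  exact Prod.ext (mul_right_cancel₀ ha (by linarith [h.1])) rfl

theorem det_hermiteMap (a b t : ℤ) :
    LinearMap.det (hermiteMap a b t).toIntLinearMap = a * b := by
  rw [← LinearMap.det_toMatrix (Module.Basis.finTwoProd ℤ), Matrix.det_fin_two]
  simp [LinearMap.toMatrix_apply, hermiteMap]

def hermiteLattice (a b t : ℤ) : AddSubgroup (ℤ × ℤ) := (hermiteMap a b t).range

section hermiteLattice

variable {a b t : ℤ}

theorem index_hermiteLattice (ha : a ≠ 0) (hb : b ≠ 0) (t : ℤ) :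
    (hermiteLattice a b t).index = (a * b).natAbs := by
  rw [hermiteLattice, AddMonoidHom.index_range_eq_natAbs_det _ (hermiteMap_injective ha hb t),
    det_hermiteMap]

theorem index_hermiteLattice_natCast {a b : ℕ} (ha : a ≠ 0) (hb : b ≠ 0) (t : ℤ) :
    (hermiteLattice a b t).index = a * b := by
  rw [index_hermiteLattice (by exact_mod_cast ha) (by exact_mod_cast hb), ← Nat.cast_mul,
    Int.natAbs_natCast]

theorem mem_hermiteLattice (hb : b ≠ 0) {p : ℤ × ℤ} :
    p ∈ hermiteLattice a b t ↔ b ∣ p.2 ∧ a ∣ p.1 - p.2 / b * t := by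
  constructor
  · rintro ⟨⟨m, n⟩, rfl⟩
    simp only [hermiteMap, AddMonoidHom.coe_mk, ZeroHom.coe_mk, Int.mul_ediv_cancel _ hb]
    exact ⟨dvd_mul_left b n, ⟨m, by ring⟩⟩
  · rintro ⟨⟨n, hn⟩, ⟨m, hm⟩⟩
    rw [hn, Int.mul_ediv_cancel_left _ hb] at hm
    refine ⟨(m, n), Prod.ext ?_ ?_⟩ <;> simp only [hermiteMap, AddMonoidHom.coe_mk, ZeroHom.coe_mk]
    · linarith
    · rw [hn, mul_comm]

theorem mk_zero_mem_hermiteLattice (hb : b ≠ 0) {x : ℤ} :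
    (x, 0) ∈ hermiteLattice a b t ↔ a ∣ x := by
  simp [mem_hermiteLattice hb]

theorem mk_mem_hermiteLattice (hb : b ≠ 0) {x : ℤ} :
    (x, b) ∈ hermiteLattice a b t ↔ a ∣ x - t := by
  simp [mem_hermiteLattice hb, Int.ediv_self hb]

theorem exists_mk_mem_hermiteLattice (hb : b ≠ 0) {y : ℤ} :
    (∃ x, (x, y) ∈ hermiteLattice a b t) ↔ b ∣ y := by
  simp only [mem_hermiteLattice hb]
  exact ⟨fun ⟨_, h, _⟩ => h, fun h => ⟨y / b * t, h, by simp⟩⟩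

theorem eq_hermiteLattice {H : AddSubgroup (ℤ × ℤ)} (hb : b ≠ 0)
    (hA : ∀ x, (x, 0) ∈ H ↔ a ∣ x) (hB : ∀ y, (∃ x, (x, y) ∈ H) ↔ b ∣ y) (htb : (t, b) ∈ H) :
    H = hermiteLattice a b t := by
  apply le_antisymm
  · rintro ⟨x, y⟩ hxy
    obtain ⟨n, rfl⟩ := (hB y).mp ⟨x, hxy⟩
    rw [mem_hermiteLattice hb]
    refine ⟨dvd_mul_right b n, (hA _).mp ?_⟩
    convert sub_mem hxy (zsmul_mem htb n) using 1
    simp [Int.mul_ediv_cancel_left _ hb, mul_comm]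
  · rintro _ ⟨p, rfl⟩
    rw [hermiteMap_apply]
    exact add_mem (zsmul_mem ((hA a).mpr dvd_rfl) _) (zsmul_mem htb _)

end hermiteLattice

theorem hermiteLattice_inj {a b t a' b' t' : ℕ} (hb : b ≠ 0) (ht : t < a) (hb' : b' ≠ 0)
    (ht' : t' < a') :
    hermiteLattice a b t = hermiteLattice a' b' t' ↔ a = a' ∧ b = b' ∧ t = t' := by
  refine ⟨fun h => ?_, by rintro ⟨rfl, rfl, rfl⟩; rfl⟩
  have hb₀ : (b : ℤ) ≠ 0 := by exact_mod_cast hb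
  have hb₀' : (b' : ℤ) ≠ 0 := by exact_mod_cast hb'
  have hA (x : ℤ) : (a : ℤ) ∣ x ↔ (a' : ℤ) ∣ x := by
    rw [← mk_zero_mem_hermiteLattice hb₀, h, mk_zero_mem_hermiteLattice hb₀']
  have hB (y : ℤ) : (b : ℤ) ∣ y ↔ (b' : ℤ) ∣ y := by
    rw [← exists_mk_mem_hermiteLattice hb₀, h, exists_mk_mem_hermiteLattice hb₀']
  obtain rfl : a = a' := Nat.dvd_antisymm (Int.natCast_dvd_natCast.mp ((hA a').mpr dvd_rfl))
    (Int.natCast_dvd_natCast.mp ((hA a).mp dvd_rfl))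
  obtain rfl : b = b' := Nat.dvd_antisymm (Int.natCast_dvd_natCast.mp ((hB b').mpr dvd_rfl))
    (Int.natCast_dvd_natCast.mp ((hB b).mp dvd_rfl))
  have htb : ((t : ℤ), (b : ℤ)) ∈ hermiteLattice a b t' := by
    rw [← h, mk_mem_hermiteLattice hb₀, sub_self]
    exact dvd_zero _
  rw [mk_mem_hermiteLattice hb₀, ← Nat.modEq_iff_dvd] at htb
  exact ⟨rfl, rfl, htb.symm.eq_of_lt_of_lt ht ht'⟩

theorem exists_eq_hermiteLattice (H : AddSubgroup (ℤ × ℤ)) (hH : H.index ≠ 0) :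
    ∃ a b t : ℕ, b ≠ 0 ∧ t < a ∧ H = hermiteLattice a b t := by
  obtain ⟨a, hA⟩ := Int.exists_natCast_forall_mem_iff_dvd (H.comap (AddMonoidHom.inl ℤ ℤ))
  obtain ⟨b, hB⟩ := Int.exists_natCast_forall_mem_iff_dvd (H.map (AddMonoidHom.snd ℤ ℤ))
  replace hA (x : ℤ) : (x, 0) ∈ H ↔ (a : ℤ) ∣ x := hA x
  replace hB (y : ℤ) : (∃ x, (x, y) ∈ H) ↔ (b : ℤ) ∣ y := by simp [← hB]
  -- `a` and `b` divide the index, because `H.index • p ∈ H` for every `p`.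
  have hindex_mem (p : ℤ × ℤ) : (H.index : ℤ) • p ∈ H := by
    exact_mod_cast AddSubgroup.nsmul_index_mem H p
  have ha : a ≠ 0 := by
    have := (hA _).mp (by simpa using hindex_mem (1, 0))
    exact fun h => hH (by simpa [h] using this)
  have hb : b ≠ 0 := by
    have := (hB _).mp ⟨0, by simpa using hindex_mem (0, 1)⟩
    exact fun h => hH (by simpa [h] using this)
  obtain ⟨s, hs⟩ := (hB b).mpr dvd_rfl
  have ha₀ : (0 : ℤ) < a := by omega
  have hsa := Int.emod_lt_of_pos s ha₀
  refine ⟨a, b, (s % a).toNat, hb, by omega, eq_hermiteLattice (by exact_mod_cast hb) hA hB ?_⟩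
  rw [Int.toNat_of_nonneg (Int.emod_nonneg s ha₀.ne'), Int.emod_def]
  convert sub_mem hs (zsmul_mem ((hA a).mpr dvd_rfl) (s / a)) using 1
  simp [mul_comm]

theorem index_hermiteLattice_of_mem_divisors {a d : ℕ} (ha : a ∈ d.divisors) (t : ℤ) :
    (hermiteLattice a (d / a : ℕ) t).index = d := by
  have hab : a * (d / a) = d := Nat.mul_div_cancel' (Nat.dvd_of_mem_divisors ha)
  have hd : d ≠ 0 := Nat.ne_zero_of_mem_divisors ha
  rw [index_hermiteLattice_natCast (Nat.pos_of_mem_divisors ha).ne'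
    (right_ne_zero_of_mul (hab ▸ hd)), hab]

def hermiteLatticeOfIndex (d : ℕ) (x : Σ a : d.divisors, Fin a) :
    {H : AddSubgroup (ℤ × ℤ) // H.index = d} :=
  ⟨hermiteLattice x.1 (d / x.1 : ℕ) x.2, index_hermiteLattice_of_mem_divisors x.1.2 _⟩

theorem hermiteLatticeOfIndex_bijective {d : ℕ} (hd : d ≠ 0) :
    Function.Bijective (hermiteLatticeOfIndex d) := by
  constructor
  · rintro ⟨⟨a, ha⟩, t⟩ ⟨⟨a', ha'⟩, t'⟩ h
    have hb {a : ℕ} (ha : a ∈ d.divisors) : d / a ≠ 0 :=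
      (Nat.div_pos (Nat.divisor_le ha) (Nat.pos_of_mem_divisors ha)).ne'
    obtain ⟨rfl, -, htt⟩ := (hermiteLattice_inj (hb ha) t.2 (hb ha') t'.2).mp (Subtype.ext_iff.mp h)
    exact Sigma.ext rfl (heq_of_eq (Fin.ext htt))
  · rintro ⟨H, hH⟩
    obtain ⟨a, b, t, hb, ht, rfl⟩ := exists_eq_hermiteLattice H (hH ▸ hd)
    have ha : 0 < a := Nat.zero_lt_of_lt ht
    have hab : a * b = d := by rwa [index_hermiteLattice_natCast ha.ne' hb] at hH
    refine ⟨⟨⟨a, Nat.mem_divisors.mpr ⟨Dvd.intro b hab, hd⟩⟩, ⟨t, ht⟩⟩, Subtype.ext ?_⟩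
    simp [hermiteLatticeOfIndex, ← hab, Nat.mul_div_cancel_left b ha]

/-- The number of subgroups of index `d` in `ℤ × ℤ` equals the sum of divisors of `d`,
and in particular is at most `d²`. -/
theorem index_d_subgroups_of_int_prod (d : ℕ) (hd : 0 < d) :
    Nat.card {H : AddSubgroup (ℤ × ℤ) // H.index = d} = ∑ k ∈ d.divisors, k ∧
    Nat.card {H : AddSubgroup (ℤ × ℤ) // H.index = d} ≤ d ^ 2 := by
  have hcard : Nat.card {H : AddSubgroup (ℤ × ℤ) // H.index = d} = ∑ k ∈ d.divisors, k := by
    rw [← Nat.card_eq_of_bijective _ (hermiteLatticeOfIndex_bijective hd.ne'), Nat.card_sigma]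
    simpa using Finset.sum_attach d.divisors (fun k => k)
  exact ⟨hcard, hcard ▸ Nat.sum_divisors_le_sq d⟩
end

section
/- A surface group of genus k > 1 has no nontrivial cyclic normal subgroup. More precisely, if G is the fundamental group of a closed orientable surface of genus k ≥ 2 and N is a normal subgroup of G that is cyclic, then N is trivial. -/
open scoped commutatorElement

/-- The surface relator `[a₁,b₁]⋯[a_k,b_k]` in the free group on `2k` generators. -/
def surfaceRelator (k : ℕ) : FreeGroup (Fin k × Fin 2) :=
  (List.ofFn fun i : Fin k => ⁅FreeGroup.of (i, (0 : Fin 2)), FreeGroup.of (i, (1 : Fin 2))⁆).prod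

/-- The fundamental group of a closed orientable surface of genus `k`, given by the
presentation `⟨a₁, b₁, …, a_k, b_k ∣ [a₁,b₁]⋯[a_k,b_k]⟩`. -/
abbrev SurfaceGroup (k : ℕ) : Type :=
  PresentedGroup ({surfaceRelator k} : Set (FreeGroup (Fin k × Fin 2)))

/-!
Cutting a surface of genus `k₁ + k₂` along a separating curve writes its group as the amalgam of
the free groups on `a₁, …, b_{k₁}` and on `a_{k₁+1}, …, b_{k₁+k₂}` over `ℤ`, the two partial
products of commutators being identified up to inversion. A generator `g` of a cyclic normal
subgroup commutes with all of its conjugates, and in this amalgam that forces `g = 1`. Up to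
conjugacy, `g` is either in the amalgamated `ℤ`, or a single letter, or a cyclically reduced word
of length `n ≥ 2`. In the first case a map to `SL(2, ℤ)` shows that `[a, b]ᵐ` does not commute
with its conjugate by `a`. In the second, conjugating by a letter `t` of the other factor makes
the reduced words of `g · tgt⁻¹` and `tgt⁻¹ · g` start in different factors. In the third, for a
suitable letter `c` of the first factor the reduced words of `g · cgc⁻¹` and `cgc⁻¹ · g` have
lengths `2n + 1` and `2n`.
-/

open Function Monoid ModularGroup
open scoped MatrixGroups

lemma forall_commute_conj_conj {M : Type*} [Group M] {g : M}
    (hg : ∀ x, Commute g (x * g * x⁻¹)) (u : M) :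
    ∀ x, Commute (u * g * u⁻¹) (x * (u * g * u⁻¹) * x⁻¹) := by
  intro x
  have := (hg (u⁻¹ * x * u)).map (MulAut.conj u)
  simp only [MulAut.conj_apply] at this
  convert this using 1
  group

lemma Subgroup.commute_of_isCyclic {G : Type*} [Group G] {N : Subgroup G} (hN : IsCyclic N)
    {a b : G} (ha : a ∈ N) (hb : b ∈ N) : Commute a b := by
  let := IsCyclic.commGroup (α := N)
  exact congrArg Subtype.val (mul_comm (⟨a, ha⟩ : N) ⟨b, hb⟩)

lemma not_commute_zpow_conj_of_pow {M : Type*} [Group M] {g y : M}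
    (h : ∀ n : ℕ, n ≠ 0 → ¬Commute (g ^ n) (y * g ^ n * y⁻¹)) {n : ℤ} (hn : n ≠ 0) :
    ¬Commute (g ^ n) (y * g ^ n * y⁻¹) := by
  have := h _ (Int.natAbs_ne_zero.2 hn)
  rcases Int.natAbs_eq n with e | e <;> rw [e]
  · rwa [zpow_natCast]
  · rwa [zpow_neg, show y * (g ^ (n.natAbs : ℤ))⁻¹ * y⁻¹ = (y * g ^ (n.natAbs : ℤ) * y⁻¹)⁻¹ by
      group, Commute.inv_inv_iff, zpow_natCast]

lemma injective_zpowersHom {G : Type*} [Group G] [IsMulTorsionFree G] {r : G} (hr : r ≠ 1) :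
    Injective (zpowersHom G r) := by
  refine (injective_iff_map_eq_one _).2 fun n hn => ?_
  rw [zpowersHom_apply, IsMulTorsionFree.zpow_eq_one_iff_right hr] at hn
  simpa using congrArg Multiplicative.ofAdd hn

lemma Subgroup.exists_notMem_and_mul_notMem_of_le_ker {G : Type*} [Group G] {K : Subgroup G}
    (e : G →* Multiplicative ℤ) (hK : K ≤ e.ker) {u : G} (hu : e u = .ofAdd 1) (x : G) :
    ∃ c, c ∉ K ∧ c * x ∉ K ∧ c⁻¹ * x ∉ K := by
  refine ⟨u ^ (|(e x).toAdd| + 1), ?_, ?_, ?_⟩ <;> intro hmem <;>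
    have := congrArg Multiplicative.toAdd (hK hmem) <;> simp [hu] at this <;>
    cases abs_cases (e x).toAdd <;> omega

namespace Monoid.PushoutI

variable {ι : Type*} {G : ι → Type*} [∀ i, Group (G i)] {H : Type*} [Group H]
  {φ : ∀ i, H →* G i}

variable (φ) in
def prodLetters (L : List (Σ i, G i)) : PushoutI φ :=
  (L.map fun l => of l.1 l.2).prod

@[simp]
lemma prodLetters_nil : prodLetters φ [] = 1 := rfl

@[simp]
lemma prodLetters_cons (l : Σ i, G i) (L : List (Σ i, G i)) :
    prodLetters φ (l :: L) = of l.1 l.2 * prodLetters φ L :=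
  List.prod_cons

@[simp]
lemma prodLetters_append (L₁ L₂ : List (Σ i, G i)) :
    prodLetters φ (L₁ ++ L₂) = prodLetters φ L₁ * prodLetters φ L₂ := by
  simp [prodLetters]

variable (φ) in
/-- The analogue of `PushoutI.Reduced` for bare lists of letters, which concatenate freely. -/
def IsReducedWord (L : List (Σ i, G i)) : Prop :=
  (∀ l ∈ L, l.2 ∉ (φ l.1).range) ∧ L.IsChain (fun a b => a.1 ≠ b.1)

lemma isReducedWord_nil : IsReducedWord φ ([] : List (Σ i, G i)) :=
  ⟨by simp, .nil⟩

lemma isReducedWord_cons {l : Σ i, G i} {L : List (Σ i, G i)} :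
    IsReducedWord φ (l :: L) ↔
      l.2 ∉ (φ l.1).range ∧ (∀ l' ∈ L.head?, l.1 ≠ l'.1) ∧ IsReducedWord φ L := by
  simp only [IsReducedWord, List.forall_mem_cons, List.isChain_cons]
  tauto

lemma isReducedWord_append {L₁ L₂ : List (Σ i, G i)} :
    IsReducedWord φ (L₁ ++ L₂) ↔ IsReducedWord φ L₁ ∧ IsReducedWord φ L₂ ∧
      ∀ a ∈ L₁.getLast?, ∀ b ∈ L₂.head?, a.1 ≠ b.1 := by
  simp only [IsReducedWord, List.forall_mem_append, List.isChain_append]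
  tauto

lemma ofCoprodI_word_prod (w : CoprodI.Word G) :
    ofCoprodI (φ := φ) w.prod = prodLetters φ w.toList := by
  rw [CoprodI.Word.prod, map_list_prod, List.map_map]
  rfl

def IsReducedWord.toWord {L : List (Σ i, G i)} (hL : IsReducedWord φ L) : CoprodI.Word G :=
  ⟨L, fun l hl h1 => hL.1 l hl (h1 ▸ one_mem _), hL.2⟩

lemma NormalWord.Transversal.eq_one_of_mem_range (d : NormalWord.Transversal φ) {i : ι}
    {g : G i} (hg : g ∈ d.set i) (hrange : g ∈ (φ i).range) : g = 1 := by
  have := (d.compl i).1 (a₁ := (⟨⟨g, hrange⟩, ⟨1, d.one_mem i⟩⟩ : (φ i).range × d.set i))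
    (a₂ := ⟨⟨1, (φ i).range.one_mem⟩, ⟨g, hg⟩⟩) (by simp)
  simpa using congrArg (fun p => (p.1 : G i)) this

lemma exists_isReducedWord (hφ : ∀ i, Injective (φ i)) (g : PushoutI φ) :
    ∃ h L, IsReducedWord φ L ∧ base φ h * prodLetters φ L = g := by
  classical
  obtain ⟨d⟩ := NormalWord.transversal_nonempty φ hφ
  let w : NormalWord d := g • NormalWord.empty
  refine ⟨w.head, w.toList, ⟨fun l hl hrange => ?_, w.chain_ne⟩, ?_⟩
  · exact w.ne_one l hl (d.eq_one_of_mem_range (w.normalized l.1 l.2 hl) hrange)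
  · rw [← ofCoprodI_word_prod, ← NormalWord.prod, NormalWord.prod_smul, NormalWord.prod_empty,
      mul_one]

lemma IsReducedWord.map_fst_eq (hφ : ∀ i, Injective (φ i)) {L₁ L₂ : List (Σ i, G i)}
    (h₁ : IsReducedWord φ L₁) (h₂ : IsReducedWord φ L₂)
    (heq : prodLetters φ L₁ = prodLetters φ L₂) : L₁.map Sigma.fst = L₂.map Sigma.fst := by
  classical
  obtain ⟨d⟩ := NormalWord.transversal_nonempty φ hφ
  obtain ⟨w₁, hw₁, hm₁⟩ := Reduced.exists_normalWord_prod_eq d (w := h₁.toWord) h₁.1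
  obtain ⟨w₂, hw₂, hm₂⟩ := Reduced.exists_normalWord_prod_eq d (w := h₂.toWord) h₂.1
  have : w₁ = w₂ := NormalWord.prod_injective (by
    rw [hw₁, hw₂, ofCoprodI_word_prod, ofCoprodI_word_prod]; exact heq)
  subst this
  exact hm₁.symm.trans hm₂

lemma IsReducedWord.exists_base_mul_eq {i : ι} {x : G i} {L : List (Σ i, G i)}
    (hL : IsReducedWord φ (⟨i, x⟩ :: L)) (h : H) :
    ∃ x', IsReducedWord φ (⟨i, x'⟩ :: L) ∧
      base φ h * prodLetters φ (⟨i, x⟩ :: L) = of i x' * prodLetters φ L := by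
  obtain ⟨hx, hhead, hL⟩ := isReducedWord_cons.1 hL
  refine ⟨φ i h * x, isReducedWord_cons.2 ⟨?_, hhead, hL⟩, ?_⟩
  · rwa [Subgroup.mul_mem_cancel_left _ (MonoidHom.mem_range.2 ⟨h, rfl⟩)]
  · rw [prodLetters_cons, map_mul, ← mul_assoc, of_apply_eq_base]

lemma IsReducedWord.exists_shorter_conj {i : ι} {x z : G i} {B : List (Σ i, G i)}
    (hL : IsReducedWord φ (⟨i, x⟩ :: (B ++ [⟨i, z⟩]))) :
    ∃ h L, IsReducedWord φ L ∧ L.length ≤ B.length + 1 ∧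
      base φ h * prodLetters φ L = of i z * (of i x * prodLetters φ (B ++ [⟨i, z⟩])) * (of i z)⁻¹ := by
  obtain ⟨-, hhead, hL⟩ := isReducedWord_cons.1 hL
  have hconj : of i z * (of i x * prodLetters φ (B ++ [⟨i, z⟩])) * (of i z)⁻¹ =
      of i (z * x) * prodLetters φ B := by
    simp [mul_assoc]
  rw [hconj]
  have hB := (isReducedWord_append.1 hL).1
  by_cases hzx : z * x ∈ (φ i).range
  · obtain ⟨h, hh⟩ := hzx
    exact ⟨h, B, hB, by omega, by rw [← hh, of_apply_eq_base]⟩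
  · refine ⟨1, ⟨i, z * x⟩ :: B, isReducedWord_cons.2 ⟨hzx, fun l hl => ?_, hB⟩, le_rfl, by simp⟩
    exact hhead l (by simp [List.head?_append, Option.mem_def.1 hl])

lemma eq_one_of_forall_commute_conj_base (hφ : ∀ i, Injective (φ i)) {i : ι}
    (hbase : ∀ h ≠ 1, ∃ y : G i, ¬Commute (φ i h) (y * φ i h * y⁻¹)) {h : H}
    (hh : ∀ x, Commute (base φ h) (x * base φ h * x⁻¹)) : h = 1 := by
  by_contra hne
  obtain ⟨y, hy⟩ := hbase h hne
  have := hh (of i y)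
  rw [← of_apply_eq_base φ i h, ← map_inv, ← map_mul, ← map_mul] at this
  exact hy ((commute_map_iff (of_injective hφ i)).1 this)

lemma not_commute_conj_of_letter (hφ : ∀ i, Injective (φ i)) {i j : ι} (hij : i ≠ j)
    {x : G i} {t : G j} (hx : x ∉ (φ i).range) (ht : t ∉ (φ j).range) :
    ¬Commute (of i x : PushoutI φ) (of j t * of i x * (of j t)⁻¹) := by
  intro hc
  have ht' : t⁻¹ ∉ (φ j).range := by rwa [inv_mem_iff]
  have hred₁ : IsReducedWord φ [⟨i, x⟩, ⟨j, t⟩, ⟨i, x⟩, ⟨j, t⁻¹⟩] := by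
    simp [isReducedWord_cons, isReducedWord_nil, hx, ht, ht', hij, hij.symm]
  have hred₂ : IsReducedWord φ [⟨j, t⟩, ⟨i, x⟩, ⟨j, t⁻¹⟩, ⟨i, x⟩] := by
    simp [isReducedWord_cons, isReducedWord_nil, hx, ht, ht', hij, hij.symm]
  have hprod : prodLetters φ [⟨i, x⟩, ⟨j, t⟩, ⟨i, x⟩, ⟨j, t⁻¹⟩] =
      prodLetters φ [⟨j, t⟩, ⟨i, x⟩, ⟨j, t⁻¹⟩, ⟨i, x⟩] := by
    simp only [prodLetters_cons, prodLetters_nil, mul_one, map_inv]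
    simpa only [mul_assoc] using hc.eq
  simpa [hij] using hred₁.map_fst_eq hφ hred₂ hprod

lemma not_commute_conj_of_cyclicallyReduced (hφ : ∀ i, Injective (φ i)) {i : ι} {x c : G i}
    {B : List (Σ i, G i)} (hxB : IsReducedWord φ (⟨i, x⟩ :: B)) (hB : B ≠ [])
    (hlast : ∀ l ∈ B.getLast?, l.1 ≠ i) (hc : c ∉ (φ i).range) (hcx : c * x ∉ (φ i).range)
    (hcx' : c⁻¹ * x ∉ (φ i).range) :
    ¬Commute (of i x * prodLetters φ B) (of i c * (of i x * prodLetters φ B) * (of i c)⁻¹) := by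
  intro hcomm
  have hW : ∀ y ∉ (φ i).range, IsReducedWord φ (⟨i, y⟩ :: B) :=
    fun y hy => isReducedWord_cons.2 ⟨hy, (isReducedWord_cons.1 hxB).2⟩
  have hred : ∀ y ∉ (φ i).range, ∀ y' L, IsReducedWord φ (⟨i, y'⟩ :: L) →
      IsReducedWord φ (⟨i, y⟩ :: (B ++ ⟨i, y'⟩ :: L)) := by
    intro y hy y' L hL
    obtain ⟨l, hl⟩ := Option.isSome_iff_exists.1 (List.getLast?_isSome.2 hB)
    refine isReducedWord_append (L₁ := ⟨i, y⟩ :: B) |>.2 ⟨hW y hy, hL, ?_⟩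
    simpa [List.getLast?_cons, hl] using hlast l hl
  -- the reduced words of `g * (c * g * c⁻¹)` and `(c * g * c⁻¹) * g`
  have hred₁ := hred x (isReducedWord_cons.1 hxB).1 (c * x) (B ++ [⟨i, c⁻¹⟩])
    (hred (c * x) hcx c⁻¹ [] (by simpa [isReducedWord_cons, isReducedWord_nil] using hc))
  have hred₂ := hred (c * x) hcx (c⁻¹ * x) B (hW _ hcx')
  have hprod := hred₁.map_fst_eq hφ hred₂ (by
    simp only [prodLetters_append, prodLetters_cons, prodLetters_nil, map_mul, map_inv, mul_one]
    simpa only [mul_assoc] using hcomm.eq)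
  simpa using congrArg List.length hprod

theorem eq_one_of_forall_commute_conj [Nontrivial ι] (hφ : ∀ i, Injective (φ i))
    (havoid : ∀ i (x : G i), ∃ c, c ∉ (φ i).range ∧ c * x ∉ (φ i).range ∧ c⁻¹ * x ∉ (φ i).range)
    {i₀ : ι} (hbase : ∀ h ≠ 1, ∃ y : G i₀, ¬Commute (φ i₀ h) (y * φ i₀ h * y⁻¹))
    {g : PushoutI φ} (hg : ∀ x, Commute g (x * g * x⁻¹)) : g = 1 := by
  obtain ⟨h, L, hL, rfl⟩ := exists_isReducedWord hφ g
  induction hn : L.length using Nat.strong_induction_on generalizing h L with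
  | _ n ih =>
  rcases L with _ | ⟨⟨i, x⟩, L⟩
  · simp [eq_one_of_forall_commute_conj_base hφ hbase (by simpa using hg)]
  obtain ⟨x, hL', hgx⟩ := hL.exists_base_mul_eq h
  rw [hgx] at hg ⊢
  have hx := (isReducedWord_cons.1 hL').1
  rcases L.eq_nil_or_concat' with rfl | ⟨B, ⟨j, z⟩, rfl⟩
  · obtain ⟨j, hij⟩ := exists_ne i
    obtain ⟨t, ht, -⟩ := havoid j 1
    exact (not_commute_conj_of_letter hφ hij.symm hx ht (by simpa using hg (of j t))).elim
  by_cases hji : j = i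
  · subst hji
    obtain ⟨h', L', hL'', hlen, heq⟩ := hL'.exists_shorter_conj
    have := ih L'.length (by simp at hn; omega) h' L' hL''
      (by rw [heq]; exact forall_commute_conj_conj hg _) rfl
    rwa [heq, conj_eq_one_iff] at this
  · obtain ⟨c, hc, hcx, hcx'⟩ := havoid i x
    exact (not_commute_conj_of_cyclicallyReduced hφ hL' (by simp) (by simpa using hji) hc hcx hcx'
      (hg (of i c))).elim

end Monoid.PushoutI

lemma Matrix.entry_one_zero_eq_zero_of_commute {X Y : Matrix (Fin 2) (Fin 2) ℤ}
    (hc : Commute X Y) (hY : Y * !![1, 1; 0, 1] = !![1, 1; 0, 1] * X) : X 1 0 = 0 := by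
  -- `hY` determines `Y` from `X`, and then `(X * Y - Y * X) 1 0 = 2 * X 1 0 ^ 2`
  have h00 := congrFun (congrFun hY 0) 0
  have h10 := congrFun (congrFun hY 1) 0
  have h11 := congrFun (congrFun hY 1) 1
  have hc10 := congrFun (congrFun hc.eq 1) 0
  simp [Matrix.mul_apply, Fin.sum_univ_two] at h00 h10 h11 hc10
  rw [h00, h10, show Y 1 1 = X 1 1 - X 1 0 by linarith] at hc10
  nlinarith

namespace ModularGroup

lemma coe_commutator_T_S : ↑(⁅T, S⁆ : SL(2, ℤ)) = (!![2, 1; 1, 1] : Matrix (Fin 2) (Fin 2) ℤ) := by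
  simp [commutatorElement_def, coe_T, coe_S, Matrix.SpecialLinearGroup.coe_inv,
    Matrix.adjugate_fin_two_of]

lemma coe_commutator_T_S_pow_succ_pos (n : ℕ) :
    0 < (↑(⁅T, S⁆ ^ (n + 1)) : Matrix (Fin 2) (Fin 2) ℤ) 1 0 ∧
      0 < (↑(⁅T, S⁆ ^ (n + 1)) : Matrix (Fin 2) (Fin 2) ℤ) 1 1 := by
  rw [Matrix.SpecialLinearGroup.coe_pow, coe_commutator_T_S]
  induction n with
  | zero => simp
  | succ n ih =>
    rw [pow_succ]
    simp [Matrix.mul_apply, Fin.sum_univ_two]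
    omega

lemma not_commute_commutator_T_S_pow_conj {n : ℕ} (hn : n ≠ 0) :
    ¬Commute (⁅T, S⁆ ^ n) (T * ⁅T, S⁆ ^ n * T⁻¹) := by
  intro hc
  obtain ⟨n, rfl⟩ := Nat.exists_eq_succ_of_ne_zero hn
  set X := ⁅T, S⁆ ^ (n + 1)
  set f : SL(2, ℤ) →* Matrix (Fin 2) (Fin 2) ℤ := Matrix.SpecialLinearGroup.coeMonoidHom
  have hconj : f (T * X * T⁻¹) * !![1, 1; 0, 1] = !![1, 1; 0, 1] * f X := by
    rw [← coe_T, ← Matrix.SpecialLinearGroup.coeMonoidHom_apply, ← map_mul, ← map_mul,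
      inv_mul_cancel_right]
  have h := Matrix.entry_one_zero_eq_zero_of_commute (hc.map f) hconj
  exact (coe_commutator_T_S_pow_succ_pos n).1.ne' h

end ModularGroup

lemma FreeGroup.not_commute_commutator_zpow_conj {m : ℤ} (hm : m ≠ 0) :
    ¬Commute (⁅of (0 : Fin 2), of (1 : Fin 2)⁆ ^ m)
      (of (0 : Fin 2) * ⁅of (0 : Fin 2), of (1 : Fin 2)⁆ ^ m * (of (0 : Fin 2))⁻¹) := by
  intro hc
  have := hc.map (FreeGroup.lift ![T, S])
  simp [map_commutatorElement] at this
  exact not_commute_zpow_conj_of_pow (fun n hn => not_commute_commutator_T_S_pow_conj hn) hm this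

lemma map_surfaceRelator {M : Type*} [Group M] {k : ℕ} (f : FreeGroup (Fin k × Fin 2) →* M) :
    f (surfaceRelator k) =
      (List.ofFn fun i => ⁅f (.of (i, 0)), f (.of (i, 1))⁆).prod := by
  simp [surfaceRelator, map_list_prod, List.map_ofFn, Function.comp_def, map_commutatorElement]

lemma map_surfaceRelator_eq_one {M : Type*} [CommGroup M] {k : ℕ}
    (f : FreeGroup (Fin k × Fin 2) →* M) : f (surfaceRelator k) = 1 := by
  rw [map_surfaceRelator]
  exact List.prod_eq_one (by simp [commutatorElement_def])

lemma surfaceRelator_add (k₁ k₂ : ℕ) :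
    surfaceRelator (k₁ + k₂) =
      FreeGroup.map (Prod.map (Fin.castAdd k₂) id) (surfaceRelator k₁) *
        FreeGroup.map (Prod.map (Fin.natAdd k₁) id) (surfaceRelator k₂) := by
  rw [map_surfaceRelator, map_surfaceRelator, surfaceRelator, List.ofFn_add, List.prod_append]
  simp
  rfl

def projFirstHandle (k : ℕ) [NeZero k] : FreeGroup (Fin k × Fin 2) →* FreeGroup (Fin 2) :=
  FreeGroup.lift fun q => if q.1 = 0 then .of q.2 else 1

lemma projFirstHandle_surfaceRelator (k : ℕ) [NeZero k] :
    projFirstHandle k (surfaceRelator k) = ⁅FreeGroup.of (0 : Fin 2), FreeGroup.of 1⁆ := by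
  obtain ⟨k, rfl⟩ := Nat.exists_eq_succ_of_ne_zero (NeZero.ne k)
  rw [map_surfaceRelator, List.ofFn_succ, List.prod_cons, List.prod_eq_one, mul_one]
  · simp [projFirstHandle]
  · simp [projFirstHandle, Fin.succ_ne_zero]

lemma not_commute_surfaceRelator_zpow_conj (n : ℕ) [NeZero n] {m : ℤ} (hm : m ≠ 0) :
    ¬Commute (surfaceRelator n ^ m)
      (.of (0, 0) * surfaceRelator n ^ m * (FreeGroup.of ((0 : Fin n), (0 : Fin 2)))⁻¹) := by
  intro hc
  have := hc.map (projFirstHandle n)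
  simp only [map_mul, map_inv, map_zpow, projFirstHandle_surfaceRelator] at this
  simpa [projFirstHandle] using FreeGroup.not_commute_commutator_zpow_conj hm this

lemma surfaceRelator_ne_one (n : ℕ) [NeZero n] : surfaceRelator n ≠ 1 := fun h =>
  not_commute_surfaceRelator_zpow_conj n one_ne_zero (by simp [h])

lemma exists_notMem_zpowers_surfaceRelator (n : ℕ) [NeZero n] (x : FreeGroup (Fin n × Fin 2)) :
    ∃ c, c ∉ Subgroup.zpowers (surfaceRelator n) ∧ c * x ∉ Subgroup.zpowers (surfaceRelator n) ∧
      c⁻¹ * x ∉ Subgroup.zpowers (surfaceRelator n) :=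
  Subgroup.exists_notMem_and_mul_notMem_of_le_ker
    (FreeGroup.lift fun q => if q = (0, 0) then .ofAdd 1 else 1)
    (Subgroup.zpowers_le.2 (map_surfaceRelator_eq_one _)) (u := .of (0, 0)) (by simp) x

namespace SurfaceGroup

abbrev splittingFactor (k₁ k₂ : ℕ) (b : Bool) : Type := FreeGroup (Fin (cond b k₁ k₂) × Fin 2)

def splittingCurve (k₁ k₂ : ℕ) : ∀ b, splittingFactor k₁ k₂ b
  | true => surfaceRelator k₁
  | false => (surfaceRelator k₂)⁻¹

def splittingMap (k₁ k₂ : ℕ) (b : Bool) : Multiplicative ℤ →* splittingFactor k₁ k₂ b :=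
  zpowersHom _ (splittingCurve k₁ k₂ b)

variable {k₁ k₂ : ℕ}

lemma splittingMap_true_ofAdd_one :
    splittingMap k₁ k₂ true (.ofAdd 1) = surfaceRelator k₁ := zpow_one _

lemma splittingMap_false_ofAdd_one :
    splittingMap k₁ k₂ false (.ofAdd 1) = (surfaceRelator k₂)⁻¹ := zpow_one _

def toPushoutIGen (p : Fin (k₁ + k₂) × Fin 2) : PushoutI (splittingMap k₁ k₂) :=
  Fin.addCases (fun i => PushoutI.of (φ := splittingMap k₁ k₂) true (.of (i, p.2)))
    (fun i => PushoutI.of (φ := splittingMap k₁ k₂) false (.of (i, p.2))) p.1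

lemma lift_toPushoutIGen_comp_map_castAdd :
    (FreeGroup.lift toPushoutIGen).comp (FreeGroup.map (Prod.map (Fin.castAdd k₂) id)) =
      PushoutI.of (φ := splittingMap k₁ k₂) true :=
  FreeGroup.ext_hom _ _ fun _ => by simp [toPushoutIGen]

lemma lift_toPushoutIGen_comp_map_natAdd :
    (FreeGroup.lift toPushoutIGen).comp (FreeGroup.map (Prod.map (Fin.natAdd k₁) id)) =
      PushoutI.of (φ := splittingMap k₁ k₂) false :=
  FreeGroup.ext_hom _ _ fun _ => by simp [toPushoutIGen]

def toPushoutI : SurfaceGroup (k₁ + k₂) →* PushoutI (splittingMap k₁ k₂) :=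
  PresentedGroup.toGroup (f := toPushoutIGen) <| by
    rintro _ rfl
    rw [surfaceRelator_add, map_mul, ← MonoidHom.comp_apply, lift_toPushoutIGen_comp_map_castAdd,
      ← MonoidHom.comp_apply, lift_toPushoutIGen_comp_map_natAdd, ← splittingMap_true_ofAdd_one, ← inv_inv (surfaceRelator k₂),
      ← splittingMap_false_ofAdd_one, map_inv, PushoutI.of_apply_eq_base,
      PushoutI.of_apply_eq_base, mul_inv_cancel]

def splittingEmbedding : ∀ b, Fin (cond b k₁ k₂) → Fin (k₁ + k₂)
  | true => Fin.castAdd k₂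
  | false => Fin.natAdd k₁

lemma toPushoutIGen_splittingEmbedding (b : Bool) (i : Fin (cond b k₁ k₂)) (j : Fin 2) :
    toPushoutIGen (splittingEmbedding b i, j) = PushoutI.of b (FreeGroup.of (i, j)) := by
  cases b
  · exact Fin.addCases_right _
  · exact Fin.addCases_left _

def ofSplittingFactor (b : Bool) : splittingFactor k₁ k₂ b →* SurfaceGroup (k₁ + k₂) :=
  (PresentedGroup.mk _).comp (FreeGroup.map (Prod.map (splittingEmbedding b) id))

lemma ofSplittingFactor_of (b : Bool) (i : Fin (cond b k₁ k₂)) (j : Fin 2) :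
    ofSplittingFactor b (.of (i, j)) = PresentedGroup.of (splittingEmbedding b i, j) :=
  rfl

def ofPushoutI : PushoutI (splittingMap k₁ k₂) →* SurfaceGroup (k₁ + k₂) :=
  PushoutI.lift ofSplittingFactor ((ofSplittingFactor true).comp (splittingMap k₁ k₂ true)) <| by
    rintro (_ | _)
    · refine MonoidHom.ext_mint ?_
      have : ofSplittingFactor true (surfaceRelator k₁) *
          ofSplittingFactor false (surfaceRelator k₂) = 1 := by
        rw [ofSplittingFactor, ofSplittingFactor, MonoidHom.comp_apply, MonoidHom.comp_apply,
          ← map_mul]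
        convert PresentedGroup.one_of_mem (Set.mem_singleton (surfaceRelator (k₁ + k₂))) using 2
        exact (surfaceRelator_add k₁ k₂).symm
      simp only [MonoidHom.comp_apply, splittingMap_true_ofAdd_one, splittingMap_false_ofAdd_one,
        map_inv]
      exact inv_eq_of_mul_eq_one_left this
    · rfl

lemma toPushoutI_of (p : Fin (k₁ + k₂) × Fin 2) :
    toPushoutI (PresentedGroup.of p) = toPushoutIGen p :=
  PresentedGroup.toGroup.of _

lemma ofPushoutI_of (b : Bool) (x : splittingFactor k₁ k₂ b) :
    ofPushoutI (PushoutI.of b x) = ofSplittingFactor b x :=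
  PushoutI.lift_of ..

def equivPushoutI : SurfaceGroup (k₁ + k₂) ≃* PushoutI (splittingMap k₁ k₂) :=
  MonoidHom.toMulEquiv toPushoutI ofPushoutI
    (PresentedGroup.ext fun ⟨i, j⟩ => by
      obtain ⟨b, i, rfl⟩ : ∃ (b : Bool) (i' : Fin (cond b k₁ k₂)), i = splittingEmbedding b i' := by
        induction i using Fin.addCases with
        | left i => exact ⟨true, i, rfl⟩
        | right i => exact ⟨false, i, rfl⟩
      simp [toPushoutI_of, toPushoutIGen_splittingEmbedding, ofPushoutI_of, ofSplittingFactor_of])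
    (PushoutI.hom_ext_nonempty fun b => FreeGroup.ext_hom _ _ fun ⟨i, j⟩ => by
      simp [ofPushoutI_of, ofSplittingFactor_of, toPushoutI_of, toPushoutIGen_splittingEmbedding])

lemma range_splittingMap (b : Bool) :
    (splittingMap k₁ k₂ b).range = Subgroup.zpowers (surfaceRelator (cond b k₁ k₂)) := by
  cases b
  · exact Subgroup.zpowers_inv
  · rfl

section

variable [NeZero k₁] [NeZero k₂]

lemma splittingMap_injective (b : Bool) : Injective (splittingMap k₁ k₂ b) := by
  refine injective_zpowersHom ?_
  cases b
  · exact inv_ne_one.2 (surfaceRelator_ne_one k₂)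
  · exact surfaceRelator_ne_one k₁

theorem eq_one_of_forall_commute_conj {g : SurfaceGroup (k₁ + k₂)}
    (hg : ∀ x, Commute g (x * g * x⁻¹)) : g = 1 := by
  have havoid (b : Bool) (x : splittingFactor k₁ k₂ b) : ∃ c, c ∉ (splittingMap k₁ k₂ b).range ∧
      c * x ∉ (splittingMap k₁ k₂ b).range ∧ c⁻¹ * x ∉ (splittingMap k₁ k₂ b).range := by
    have : NeZero (cond b k₁ k₂) := by cases b <;> assumption
    simpa only [range_splittingMap] using exists_notMem_zpowers_surfaceRelator (cond b k₁ k₂) x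
  have hbase (h : Multiplicative ℤ) (hh : h ≠ 1) :
      ∃ y, ¬Commute (splittingMap k₁ k₂ true h) (y * splittingMap k₁ k₂ true h * y⁻¹) :=
    ⟨_, not_commute_surfaceRelator_zpow_conj k₁ (m := h.toAdd) (by simpa using hh)⟩
  have := PushoutI.eq_one_of_forall_commute_conj splittingMap_injective havoid hbase
    (g := equivPushoutI g) fun x => by
      simpa using (hg (equivPushoutI.symm x)).map equivPushoutI
  simpa using this

end

end SurfaceGroup

/-- A surface group of genus `k ≥ 2` has no nontrivial cyclic normal subgroup. -/
theorem surfaceGroup_no_cyclic_normal (k : ℕ) (hk : 2 ≤ k)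
    (N : Subgroup (SurfaceGroup k)) (hN : N.Normal) (hcyc : IsCyclic N) :
    N = ⊥ := by
  obtain ⟨m, rfl⟩ : ∃ m, k = m + 1 + 1 := ⟨k - 2, by omega⟩
  refine (Subgroup.eq_bot_iff_forall N).2 fun g hg => ?_
  exact SurfaceGroup.eq_one_of_forall_commute_conj fun x =>
    Subgroup.commute_of_isCyclic hcyc hg (hN.conj_mem g hg x)
end

section
/- Let ι = (ι₁, ι₂) : S → Σ × S¹ be a map inducing an injective homomorphism on fundamental groups, where S is a closed orientable surface of genus k > 1. Then the induced map (ι₁)_* : π₁(S) → π₁(Σ) is injective. -/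
open scoped commutatorElement

/-!
A central element `z` of a surface group of genus `k ≥ 2` is killed by every homomorphism to
an abelian group. Such a homomorphism is a product of powers of the exponent-sum maps of the
generators, so it suffices to treat those. For a generator `u`, pick a handle `j` other than
that of `u` and map `u ↦ X`, `a_j ↦ Y` and all other generators to `1` in the discrete Heisenberg
group; this respects the relator, and the exponent sum of `u` becomes the `X`-coordinate. Since
the image of `z` commutes with `Y`, that coordinate vanishes.

Now if `z` lies in the kernel of `(ι₁)_*`, then `ι_* z = (1, c)` is central, hence so is `z` by
injectivity, and therefore `c = (ι₂)_* z = 1`, i.e. `z = 1`.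
-/

theorem Subgroup.mem_center_of_injective_of_fst_eq_one {G H K : Type*} [Group G] [Group H]
    [CommGroup K] {φ : G →* H × K} (hφ : Function.Injective φ) {z : G} (hz : (φ z).1 = 1) :
    z ∈ Subgroup.center G := by
  rw [Subgroup.mem_center_iff]
  intro x
  apply hφ
  ext <;> simp [hz, mul_comm]

/-- Upper unitriangular integer matrices `[[1, a, c], [0, 1, b], [0, 0, 1]]`. -/
@[ext]
structure Heisenberg where
  a : ℤ
  b : ℤ
  c : ℤ

namespace Heisenberg

instance : Mul Heisenberg := ⟨fun p q => ⟨p.a + q.a, p.b + q.b, p.c + q.c + p.a * q.b⟩⟩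
instance : One Heisenberg := ⟨⟨0, 0, 0⟩⟩
instance : Inv Heisenberg := ⟨fun p => ⟨-p.a, -p.b, -p.c + p.a * p.b⟩⟩

@[simp] theorem mul_a (p q : Heisenberg) : (p * q).a = p.a + q.a := rfl
@[simp] theorem mul_b (p q : Heisenberg) : (p * q).b = p.b + q.b := rfl
@[simp] theorem mul_c (p q : Heisenberg) : (p * q).c = p.c + q.c + p.a * q.b := rfl
@[simp] theorem one_a : (1 : Heisenberg).a = 0 := rfl
@[simp] theorem one_b : (1 : Heisenberg).b = 0 := rfl
@[simp] theorem one_c : (1 : Heisenberg).c = 0 := rfl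
@[simp] theorem inv_a (p : Heisenberg) : p⁻¹.a = -p.a := rfl
@[simp] theorem inv_b (p : Heisenberg) : p⁻¹.b = -p.b := rfl
@[simp] theorem inv_c (p : Heisenberg) : p⁻¹.c = -p.c + p.a * p.b := rfl

instance : Group Heisenberg where
  mul_assoc p q r := by ext <;> simp <;> ring
  one_mul p := by ext <;> simp
  mul_one p := by ext <;> simp
  inv_mul_cancel p := by ext <;> simp

def X : Heisenberg := ⟨1, 0, 0⟩
def Y : Heisenberg := ⟨0, 1, 0⟩

def aHom : Heisenberg →* Multiplicative ℤ where
  toFun p := Multiplicative.ofAdd p.a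
  map_one' := rfl
  map_mul' _ _ := rfl

theorem aHom_X : aHom X = Multiplicative.ofAdd 1 := rfl
theorem aHom_Y : aHom Y = 1 := rfl

theorem aHom_eq_one_of_commute_Y {p : Heisenberg} (h : Commute p Y) : aHom p = 1 := by
  have hc := congrArg Heisenberg.c h.eq
  simp only [mul_c, Y] at hc
  show Multiplicative.ofAdd p.a = Multiplicative.ofAdd 0
  congr 1
  linarith

end Heisenberg

theorem lift_surfaceRelator_eq_one {k : ℕ} {G : Type*} [Group G] (f : Fin k × Fin 2 → G)
    (h : ∀ i, Commute (f (i, 0)) (f (i, 1))) : FreeGroup.lift f (surfaceRelator k) = 1 := by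
  rw [surfaceRelator, map_list_prod]
  refine List.prod_eq_one fun x hx => ?_
  simp only [List.map_ofFn, List.mem_ofFn] at hx
  obtain ⟨i, rfl⟩ := hx
  simp only [Function.comp_apply, map_commutatorElement, FreeGroup.lift_apply_of,
    commutatorElement_eq_one_iff_commute, h i]

namespace SurfaceGroup

variable {k : ℕ}

def lift {G : Type*} [Group G] (f : Fin k × Fin 2 → G) (h : ∀ i, Commute (f (i, 0)) (f (i, 1))) :
    SurfaceGroup k →* G :=
  PresentedGroup.toGroup fun _ hr => (Set.mem_singleton_iff.mp hr) ▸ lift_surfaceRelator_eq_one f h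

@[simp] theorem lift_of {G : Type*} [Group G] (f : Fin k × Fin 2 → G)
    (h : ∀ i, Commute (f (i, 0)) (f (i, 1))) (u : Fin k × Fin 2) :
    lift f h (PresentedGroup.of u) = f u :=
  PresentedGroup.toGroup.of _

def exponentSum (u : Fin k × Fin 2) : SurfaceGroup k →* Multiplicative ℤ :=
  lift (Pi.mulSingle u (Multiplicative.ofAdd 1)) fun _ => Commute.all _ _

theorem eq_prod_exponentSum {A : Type*} [CommGroup A] (f : SurfaceGroup k →* A) :
    f = ∏ u, (zpowersHom A (f (PresentedGroup.of u))).comp (exponentSum u) := by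
  refine PresentedGroup.ext fun v => ?_
  simp only [MonoidHom.finsetProd_apply, MonoidHom.comp_apply, exponentSum, lift_of]
  rw [Finset.prod_eq_single_of_mem v (Finset.mem_univ v) fun u _ huv => by
    rw [Pi.mulSingle_eq_of_ne' huv, map_one]]
  simp

def heisenbergHom (u : Fin k × Fin 2) (j : Fin k) (hj : j ≠ u.1) : SurfaceGroup k →* Heisenberg :=
  lift (fun w => if w = u then Heisenberg.X else if w = (j, 0) then Heisenberg.Y else 1)
    fun i => by
      by_cases hi : (i, 1) = u
      · have hu0 : (i, 0) ≠ u := fun h => absurd (h.trans hi.symm) (by simp)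
        have hj0 : (i, (0 : Fin 2)) ≠ (j, 0) := fun h =>
          hj (by rw [← hi]; exact (congrArg Prod.fst h).symm)
        rw [if_neg hu0, if_neg hj0]
        exact Commute.one_left _
      · have hj1 : (i, (1 : Fin 2)) ≠ (j, 0) := by simp
        rw [if_neg hi, if_neg hj1]
        exact Commute.one_right _

theorem aHom_comp_heisenbergHom (u : Fin k × Fin 2) (j : Fin k) (hj : j ≠ u.1) :
    Heisenberg.aHom.comp (heisenbergHom u j hj) = exponentSum u := by
  refine PresentedGroup.ext fun v => ?_
  simp only [MonoidHom.comp_apply, heisenbergHom, exponentSum, lift_of]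
  by_cases hv : v = u
  · simp [hv, Heisenberg.aHom_X]
  · rw [if_neg hv, Pi.mulSingle_eq_of_ne hv]
    split_ifs
    exacts [Heisenberg.aHom_Y, map_one _]

theorem heisenbergHom_of_mk_zero (u : Fin k × Fin 2) (j : Fin k) (hj : j ≠ u.1) :
    heisenbergHom u j hj (PresentedGroup.of (j, 0)) = Heisenberg.Y := by
  have hu : (j, 0) ≠ u := fun h => hj (congrArg Prod.fst h)
  simp [heisenbergHom, hu]

theorem exponentSum_eq_one_of_mem_center (hk : 1 < k) (u : Fin k × Fin 2) {z : SurfaceGroup k}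
    (hz : z ∈ Subgroup.center (SurfaceGroup k)) : exponentSum u z = 1 := by
  have : Nontrivial (Fin k) := Fin.nontrivial_iff_two_le.mpr hk
  obtain ⟨j, hj⟩ := exists_ne u.1
  rw [← aHom_comp_heisenbergHom u j hj, MonoidHom.comp_apply]
  apply Heisenberg.aHom_eq_one_of_commute_Y
  rw [← heisenbergHom_of_mk_zero u j hj]
  exact ((show Commute _ z from Subgroup.mem_center_iff.mp hz _).map _).symm

theorem map_eq_one_of_mem_center (hk : 1 < k) {A : Type*} [CommGroup A] (f : SurfaceGroup k →* A)
    {z : SurfaceGroup k} (hz : z ∈ Subgroup.center (SurfaceGroup k)) : f z = 1 := by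
  rw [eq_prod_exponentSum f, MonoidHom.finsetProd_apply]
  exact Finset.prod_eq_one fun u _ => by
    rw [MonoidHom.comp_apply, exponentSum_eq_one_of_mem_center hk u hz, map_one]

end SurfaceGroup

theorem first_factor_injective_general (k g : ℕ) (hk : 1 < k)
    (φ : SurfaceGroup k →* SurfaceGroup g × Multiplicative ℤ)
    (hφ : Function.Injective φ) :
    Function.Injective ((MonoidHom.fst (SurfaceGroup g) (Multiplicative ℤ)).comp φ) := by
  refine (injective_iff_map_eq_one _).mpr fun z hz => hφ ?_
  have hcenter : z ∈ Subgroup.center (SurfaceGroup k) :=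
    Subgroup.mem_center_of_injective_of_fst_eq_one hφ hz
  rw [map_one]
  exact Prod.ext hz (SurfaceGroup.map_eq_one_of_mem_center hk
    ((MonoidHom.snd (SurfaceGroup g) (Multiplicative ℤ)).comp φ) hcenter)

/-- If `ι = (ι₁, ι₂) : S → Σ × S¹` induces an injective homomorphism on fundamental
groups, where `S` has genus `k > 1` and `Σ` has genus `g ≥ 2` (so that
`π₁(S) = SurfaceGroup k`, `π₁(Σ) = SurfaceGroup g`, `π₁(S¹) = ℤ`), then the induced map
on the first factor `(ι₁)_* : π₁(S) → π₁(Σ)` is injective. -/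
theorem first_factor_injective (k g : ℕ) (hk : 1 < k) (hg : 2 ≤ g)
    (φ : SurfaceGroup k →* SurfaceGroup g × Multiplicative ℤ)
    (hφ : Function.Injective φ) :
    Function.Injective ((MonoidHom.fst (SurfaceGroup g) (Multiplicative ℤ)).comp φ) :=
  first_factor_injective_general k g hk φ hφ
end
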